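/- The mapping from a φ-row to its minimal representative — replacing each block A_i^{m_i} in the maximal factorization by A_i^{min(m_i, rank(A_i)+1)} — produces a φ-row equivalent (∼) to the original, and two φ-rows are equivalent iff they have the same minimal representative. -/

import Mathlib

structure Atom (α β : Type) where
  req : Finset α
  prop : Finset β
deriving DecidableEq

def rank {α β : Type} (REQ : Finset α) (A : Atom α β) : ℕ :=
  REQ.card - A.req.card

def ValidFact {α β : Type} (l : List (Atom α β × ℕ)) : Prop :=
  (∀ b ∈ l, 0 < b.2) ∧ List.Chain' (fun b b' => b.1 ≠ b'.1) l

def BlockEquiv {α β : Type} (REQ : Finset α) (b b' : Atom α β × ℕ) : Prop :=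
  b.1 = b'.1 ∧ (b.2 = b'.2 ∨ (rank REQ b.1 < b.2 ∧ rank REQ b.1 < b'.2))

def RowEquiv {α β : Type} (REQ : Finset α) (r r' : List (Atom α β × ℕ)) : Prop :=
  List.Forall₂ (BlockEquiv REQ) r r'

/-- The minimal representative: each block A^m is replaced by A^{min(m, rank(A)+1)}. -/
def minimize {α β : Type} (REQ : Finset α) (l : List (Atom α β × ℕ)) :
    List (Atom α β × ℕ) :=
  l.map (fun b => (b.1, min b.2 (rank REQ b.1 + 1)))

/-!
Two blocks are equivalent exactly when they carry the same atom and their multiplicities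
agree after truncation at `rank + 1`; so `∼` is the kernel of the blockwise truncation
`minimize`, which is idempotent and preserves positivity and the distinctness of adjacent atoms.
-/

theorem List.forall₂_iff_map_eq {γ δ ε : Type*} {R : γ → δ → Prop} {f : γ → ε} {g : δ → ε}
    (h : ∀ a b, R a b ↔ f a = g b) {l : List γ} {l' : List δ} :
    List.Forall₂ R l l' ↔ l.map f = l'.map g := by
  rw [← List.forall₂_eq_eq_eq, List.forall₂_map_left_iff, List.forall₂_map_right_iff]
  exact ⟨.imp fun a b => (h a b).1, .imp fun a b => (h a b).2⟩

section

variable {α β : Type} (REQ : Finset α)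

theorem blockEquiv_iff (b b' : Atom α β × ℕ) :
    BlockEquiv REQ b b' ↔
      (b.1, min b.2 (rank REQ b.1 + 1)) = (b'.1, min b'.2 (rank REQ b'.1 + 1)) := by
  obtain ⟨A, m⟩ := b
  obtain ⟨A', m'⟩ := b'
  simp only [BlockEquiv, Prod.mk.injEq]
  constructor <;> rintro ⟨rfl, h⟩ <;> exact ⟨rfl, by omega⟩

theorem rowEquiv_iff_minimize_eq (r r' : List (Atom α β × ℕ)) :
    RowEquiv REQ r r' ↔ minimize REQ r = minimize REQ r' :=
  List.forall₂_iff_map_eq (blockEquiv_iff REQ)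

@[simp]
theorem minimize_minimize (r : List (Atom α β × ℕ)) :
    minimize REQ (minimize REQ r) = minimize REQ r := by
  simp only [minimize, List.map_map, Function.comp_def, min_assoc, min_self]

theorem ValidFact.minimize {r : List (Atom α β × ℕ)} (hr : ValidFact r) :
    ValidFact (minimize REQ r) := by
  obtain ⟨hpos, hchain⟩ := hr
  refine ⟨?_, (List.isChain_map _).2 hchain⟩
  simp only [_root_.minimize, List.mem_map]
  rintro _ ⟨b, hb, rfl⟩
  exact lt_min (hpos b hb) (Nat.succ_pos _)

end

theorem minimize_spec_general {α β : Type} (REQ : Finset α) (r r' : List (Atom α β × ℕ))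
    (hr : ValidFact r) :
    ValidFact (minimize REQ r) ∧ RowEquiv REQ r (minimize REQ r) ∧
    (RowEquiv REQ r r' ↔ minimize REQ r = minimize REQ r') :=
  ⟨hr.minimize REQ, (rowEquiv_iff_minimize_eq REQ _ _).2 (minimize_minimize REQ r).symm,
    rowEquiv_iff_minimize_eq REQ r r'⟩

/-- Minimizing a φ-row yields an equivalent φ-row, and two φ-rows are equivalent iff
they have the same minimal representative. -/
theorem minimize_spec {α β : Type} (REQ : Finset α) (r r' : List (Atom α β × ℕ))
    (hr : ValidFact r) (hr' : ValidFact r') :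
    ValidFact (minimize REQ r) ∧ RowEquiv REQ r (minimize REQ r) ∧
    (RowEquiv REQ r r' ↔ minimize REQ r = minimize REQ r') :=
  minimize_spec_general REQ r r' hr
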